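/- Connected-component characterization of IC and IR pricing rules: a pricing rule p is IC and IR if and only if there exist reals h_i^C(v_{-i}) (one per agent i, per v_{-i} ∈ Θ_{-i}, per connected component C of Θ_i(v_{-i})) such that p is the component-wise Groves pricing rule given by these reals and, for every agent i and every v_{-i} ∈ Θ_{-i}, the family (h_i^C(v_{-i}))_C satisfies Constr-C at v_{-i}. -/

import Mathlib

variable {n : ℕ} {Γ : Type*}

/-- The welfare of a type profile: the maximum total value over allocations. -/
noncomputable def welfare [Fintype Γ] [Nonempty Γ] (v : Fin n → Γ → ℝ) : ℝ :=
  Finset.univ.sup' Finset.univ_nonempty fun γ => ∑ j, v j γ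

/-- The typeSlice `Θ_i(v_{-i})`: types for agent `i` consistent with the others' types in `v`. -/
def typeSlice (Θ : Set (Fin n → Γ → ℝ)) (i : Fin n) (v : Fin n → Γ → ℝ) : Set (Γ → ℝ) :=
  {vi | Function.update v i vi ∈ Θ}

/-- `f` depends only on the coordinates other than `i` (i.e. is a function of `v_{-i}`). -/
def IndepOf (i : Fin n) (f : (Fin n → Γ → ℝ) → ℝ) : Prop :=
  ∀ v v' : Fin n → Γ → ℝ, (∀ j, j ≠ i → v j = v' j) → f v = f v'

/-- Incentive compatibility of a pricing rule `p` w.r.t. allocation function `f`. -/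
def IC (Θ : Set (Fin n → Γ → ℝ)) (f : (Fin n → Γ → ℝ) → Γ)
    (p : Fin n → (Fin n → Γ → ℝ) → ℝ) : Prop :=
  ∀ (i : Fin n) (v v' : Fin n → Γ → ℝ), v ∈ Θ → v' ∈ Θ → (∀ j, j ≠ i → v j = v' j) →
    v i (f v) - p i v ≥ v i (f v') - p i v'

/-- Individual rationality of a pricing rule `p` w.r.t. allocation function `f`. -/
def IR (Θ : Set (Fin n → Γ → ℝ)) (f : (Fin n → Γ → ℝ) → Γ)
    (p : Fin n → (Fin n → Γ → ℝ) → ℝ) : Prop :=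
  ∀ (i : Fin n), ∀ v ∈ Θ, v i (f v) - p i v ≥ 0

/-- `Θ_i^α(v_{-i})`: types of agent `i` leading to efficient allocation `α`. -/
def allocSlice (Θ : Set (Fin n → Γ → ℝ)) (αeff : (Fin n → Γ → ℝ) → Γ)
    (i : Fin n) (v : Fin n → Γ → ℝ) (α : Γ) : Set (Γ → ℝ) :=
  {vi | vi ∈ typeSlice Θ i v ∧ αeff (Function.update v i vi) = α}

/-- The weakest-type pricing rule. -/
noncomputable def pWT [Fintype Γ] [Nonempty Γ] (Θ : Set (Fin n → Γ → ℝ))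
    (αeff : (Fin n → Γ → ℝ) → Γ) (i : Fin n) (v : Fin n → Γ → ℝ) : ℝ :=
  sInf ((fun vi => welfare (Function.update v i vi)) '' typeSlice Θ i v)
    - ∑ j ∈ Finset.univ.erase i, v j (αeff v)

/-- The constraints Constr-Γ at `v_{-i}` for a family `(h^α)_{α ∈ Γ}`. -/
def ConstrGamma [Fintype Γ] [Nonempty Γ] (Θ : Set (Fin n → Γ → ℝ))
    (αeff : (Fin n → Γ → ℝ) → Γ) (i : Fin n) (v : Fin n → Γ → ℝ) (h : Γ → ℝ) : Prop :=
  (∀ α : Γ, ∀ vt ∈ allocSlice Θ αeff i v α, h α ≤ welfare (Function.update v i vt)) ∧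
  (∀ α β : Γ, ∀ vt ∈ allocSlice Θ αeff i v α,
    h α - h β ≤ welfare (Function.update v i vt)
      - (vt β + ∑ j ∈ Finset.univ.erase i, v j β))

/-- The constraints Constr-C at `v_{-i}` for a family indexed by connected components. -/
def ConstrC [Fintype Γ] [Nonempty Γ] (Θ : Set (Fin n → Γ → ℝ))
    (αeff : (Fin n → Γ → ℝ) → Γ) (i : Fin n) (v : Fin n → Γ → ℝ)
    (h : Set (Γ → ℝ) → ℝ) : Prop :=
  (∀ vt ∈ typeSlice Θ i v,
    h (connectedComponentIn (typeSlice Θ i v) vt) ≤ welfare (Function.update v i vt)) ∧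
  (∀ vC ∈ typeSlice Θ i v, ∀ vD ∈ typeSlice Θ i v,
    h (connectedComponentIn (typeSlice Θ i v) vC) - h (connectedComponentIn (typeSlice Θ i v) vD)
      ≤ welfare (Function.update v i vC)
        - (vC (αeff (Function.update v i vD))
            + ∑ j ∈ Finset.univ.erase i, v j (αeff (Function.update v i vD))))

/-!
Fix an agent `i` and the others' types `v_{-i}`, and let
`g(x) = p_i(x, v_{-i}) + ∑_{j≠i} v_j(α^eff(x, v_{-i}))` for `x ∈ Θ_i(v_{-i})`, so that `p_i` has
Groves form with constant `g(x)`. Incentive compatibility is exactly the inequality (ii) of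
Constr-C for `g`, and individual rationality the inequality (i); so everything reduces to `g`
being constant on connected components. Using (ii) in both directions, `g(x)` depends only on
the allocation `α^eff(x, v_{-i})`, hence takes finitely many values, and `g` is 2-Lipschitz for
the sup metric. A continuous map with finite image is constant on connected sets.
-/

open Function Finset

section Profiles

variable {i : Fin n} {v v' : Fin n → Γ → ℝ}

lemma update_congr_of_eq_off (hvv' : ∀ j, j ≠ i → v j = v' j) (x : Γ → ℝ) :
    update v i x = update v' i x := by
  rw [update_eq_iff]
  exact ⟨by rw [update_self], fun j hj => by rw [update_of_ne hj, hvv' j hj]⟩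

lemma update_eq_of_eq_off (hvv' : ∀ j, j ≠ i → v j = v' j) : update v i (v' i) = v' := by
  rw [update_congr_of_eq_off hvv', update_eq_self]

lemma sum_erase_congr_of_eq_off (hvv' : ∀ j, j ≠ i → v j = v' j) (γ : Γ) :
    ∑ j ∈ univ.erase i, v j γ = ∑ j ∈ univ.erase i, v' j γ :=
  sum_congr rfl fun j hj => by rw [hvv' j (ne_of_mem_erase hj)]

lemma sum_erase_update (v : Fin n → Γ → ℝ) (x : Γ → ℝ) (γ : Γ) :
    ∑ j ∈ univ.erase i, update v i x j γ = ∑ j ∈ univ.erase i, v j γ :=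
  sum_erase_congr_of_eq_off (fun _ hj => update_of_ne hj x v) γ

lemma sum_update_eq_add_sum_erase (v : Fin n → Γ → ℝ) (x : Γ → ℝ) (γ : Γ) :
    ∑ j, update v i x j γ = x γ + ∑ j ∈ univ.erase i, v j γ := by
  rw [← add_sum_erase _ _ (mem_univ i), update_self, sum_erase_update]

variable {Θ : Set (Fin n → Γ → ℝ)}

lemma mem_typeSlice {x : Γ → ℝ} : x ∈ typeSlice Θ i v ↔ update v i x ∈ Θ := Iff.rfl

lemma typeSlice_congr_of_eq_off (hvv' : ∀ j, j ≠ i → v j = v' j) :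
    typeSlice Θ i v = typeSlice Θ i v' := by
  ext x
  rw [mem_typeSlice, mem_typeSlice, update_congr_of_eq_off hvv']

lemma self_mem_typeSlice (hv : v ∈ Θ) : v i ∈ typeSlice Θ i v := by
  rwa [mem_typeSlice, update_eq_self]

lemma typeSlice_update (x : Γ → ℝ) : typeSlice Θ i (update v i x) = typeSlice Θ i v :=
  typeSlice_congr_of_eq_off fun _ hj => update_of_ne hj x v

end Profiles

section Welfare

variable [Fintype Γ] [Nonempty Γ]

lemma add_sum_erase_le_welfare_update (v : Fin n → Γ → ℝ) (i : Fin n) (x : Γ → ℝ) (γ : Γ) :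
    x γ + ∑ j ∈ univ.erase i, v j γ ≤ welfare (update v i x) := by
  rw [← sum_update_eq_add_sum_erase]
  exact le_sup' (fun γ => ∑ j, update v i x j γ) (mem_univ γ)

lemma welfare_update_eq {αeff : (Fin n → Γ → ℝ) → Γ}
    (heff : ∀ v : Fin n → Γ → ℝ, ∑ j, v j (αeff v) = welfare v)
    (v : Fin n → Γ → ℝ) (i : Fin n) (x : Γ → ℝ) :
    welfare (update v i x) =
      x (αeff (update v i x)) + ∑ j ∈ univ.erase i, v j (αeff (update v i x)) := by
  rw [← heff, sum_update_eq_add_sum_erase]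

end Welfare

section SliceForm

variable {Θ : Set (Fin n → Γ → ℝ)} {f : (Fin n → Γ → ℝ) → Γ}
  {p : Fin n → (Fin n → Γ → ℝ) → ℝ}

lemma IC_iff_forall_typeSlice :
    IC Θ f p ↔ ∀ (i : Fin n) (v : Fin n → Γ → ℝ), ∀ x ∈ typeSlice Θ i v, ∀ x' ∈ typeSlice Θ i v,
      x (f (update v i x')) - p i (update v i x') ≤ x (f (update v i x)) - p i (update v i x) := by
  constructor
  · intro hIC i v x hx x' hx'
    simpa only [update_self] using
      hIC i _ _ hx hx' fun j hj => by rw [update_of_ne hj, update_of_ne hj]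
  · intro h i v v' hv hv' hvv'
    have hv'i : v' i ∈ typeSlice Θ i v := by
      rwa [mem_typeSlice, update_eq_of_eq_off hvv']
    simpa only [update_eq_self, update_eq_of_eq_off hvv'] using
      h i v (v i) (self_mem_typeSlice hv) (v' i) hv'i

lemma IR_iff_forall_typeSlice :
    IR Θ f p ↔ ∀ (i : Fin n) (v : Fin n → Γ → ℝ), ∀ x ∈ typeSlice Θ i v,
      0 ≤ x (f (update v i x)) - p i (update v i x) := by
  constructor
  · intro hIR i v x hx
    simpa only [update_self] using hIR i _ hx
  · intro h i v hv
    simpa only [update_eq_self] using h i v (v i) (self_mem_typeSlice hv)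

end SliceForm

section GrovesTerm

variable {Θ : Set (Fin n → Γ → ℝ)} {αeff : (Fin n → Γ → ℝ) → Γ}
  {p : Fin n → (Fin n → Γ → ℝ) → ℝ} {i : Fin n} {v : Fin n → Γ → ℝ}

def grovesTerm (p : Fin n → (Fin n → Γ → ℝ) → ℝ) (αeff : (Fin n → Γ → ℝ) → Γ) (i : Fin n)
    (v : Fin n → Γ → ℝ) (x : Γ → ℝ) : ℝ :=
  p i (update v i x) + ∑ j ∈ univ.erase i, v j (αeff (update v i x))

lemma grovesTerm_congr_of_eq_off {v' : Fin n → Γ → ℝ} (hvv' : ∀ j, j ≠ i → v j = v' j) :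
    grovesTerm p αeff i v = grovesTerm p αeff i v' := by
  ext x
  rw [grovesTerm, grovesTerm, update_congr_of_eq_off hvv', sum_erase_congr_of_eq_off hvv']

/-- The candidate for `h_i^C(v_{-i})`: well defined once `grovesTerm` is constant on components. -/
noncomputable def componentPrice (Θ : Set (Fin n → Γ → ℝ)) (αeff : (Fin n → Γ → ℝ) → Γ)
    (p : Fin n → (Fin n → Γ → ℝ) → ℝ) (i : Fin n) (v : Fin n → Γ → ℝ) (C : Set (Γ → ℝ)) : ℝ :=
  open Classical in
  if hC : (C ∩ typeSlice Θ i v).Nonempty then grovesTerm p αeff i v hC.some else 0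

lemma indepOf_componentPrice (C : Set (Γ → ℝ)) :
    IndepOf i fun v => componentPrice Θ αeff p i v C := fun v v' hvv' => by
  dsimp only [componentPrice]
  rw [grovesTerm_congr_of_eq_off hvv', typeSlice_congr_of_eq_off hvv']

variable [Fintype Γ] [Nonempty Γ]
  (heff : ∀ v : Fin n → Γ → ℝ, ∑ j, v j (αeff v) = welfare v)
include heff

lemma grovesTerm_sub_le (hIC : IC Θ αeff p) {x x' : Γ → ℝ} (hx : x ∈ typeSlice Θ i v)
    (hx' : x' ∈ typeSlice Θ i v) :
    grovesTerm p αeff i v x - grovesTerm p αeff i v x' ≤ welfare (update v i x) -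
      (x (αeff (update v i x')) + ∑ j ∈ univ.erase i, v j (αeff (update v i x'))) := by
  have hIC' := IC_iff_forall_typeSlice.1 hIC i v x hx x' hx'
  rw [welfare_update_eq heff, grovesTerm, grovesTerm]
  linarith

lemma grovesTerm_le_welfare (hIR : IR Θ αeff p) {x : Γ → ℝ} (hx : x ∈ typeSlice Θ i v) :
    grovesTerm p αeff i v x ≤ welfare (update v i x) := by
  have hIR' := IR_iff_forall_typeSlice.1 hIR i v x hx
  rw [welfare_update_eq heff, grovesTerm]
  linarith

lemma grovesTerm_eq_of_alloc_eq (hIC : IC Θ αeff p) {x x' : Γ → ℝ} (hx : x ∈ typeSlice Θ i v)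
    (hx' : x' ∈ typeSlice Θ i v) (hα : αeff (update v i x) = αeff (update v i x')) :
    grovesTerm p αeff i v x = grovesTerm p αeff i v x' := by
  have h₁ := grovesTerm_sub_le heff hIC hx hx'
  have h₂ := grovesTerm_sub_le heff hIC hx' hx
  rw [welfare_update_eq heff, hα] at h₁
  rw [welfare_update_eq heff, ← hα] at h₂
  linarith

lemma lipschitzOnWith_grovesTerm (hIC : IC Θ αeff p) :
    LipschitzOnWith 2 (grovesTerm p αeff i v) (typeSlice Θ i v) := by
  refine LipschitzOnWith.of_le_add_mul 2 fun x hx y hy => ?_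
  have hsub := grovesTerm_sub_le heff hIC hx hy
  have hwy := add_sum_erase_le_welfare_update v i y (αeff (update v i x))
  rw [welfare_update_eq heff] at hsub hwy
  have hdx := (abs_le.1 (dist_le_pi_dist x y (αeff (update v i x)))).2
  have hdy := (abs_le.1 (dist_le_pi_dist x y (αeff (update v i y)))).1
  push_cast
  linarith

lemma grovesTerm_eq_of_mem_connectedComponentIn (hIC : IC Θ αeff p) {x y : Γ → ℝ}
    (hx : x ∈ typeSlice Θ i v) (hy : y ∈ connectedComponentIn (typeSlice Θ i v) x) :
    grovesTerm p αeff i v y = grovesTerm p αeff i v x := by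
  let S := typeSlice Θ i v
  let alloc : (Γ → ℝ) → Γ := fun z => αeff (update v i z)
  -- `grovesTerm` factors through `alloc` on `S`, so its values on `S` lie in this finite set.
  let values := Set.range fun γ => grovesTerm p αeff i v (invFunOn alloc S γ)
  have hmaps : Set.MapsTo (grovesTerm p αeff i v) S values := fun z hz =>
    ⟨alloc z, grovesTerm_eq_of_alloc_eq heff hIC (invFunOn_mem ⟨z, hz, rfl⟩) hz
      (invFunOn_eq (f := alloc) ⟨z, hz, rfl⟩)⟩
  have hsub := connectedComponentIn_subset S x
  exact isPreconnected_connectedComponentIn.constant_of_mapsTo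
    (Set.finite_range _).isDiscrete ((lipschitzOnWith_grovesTerm heff hIC).mono hsub).continuousOn
    (hmaps.mono_left hsub) hy (mem_connectedComponentIn hx)

lemma componentPrice_connectedComponentIn (hIC : IC Θ αeff p) {x : Γ → ℝ}
    (hx : x ∈ typeSlice Θ i v) :
    componentPrice Θ αeff p i v (connectedComponentIn (typeSlice Θ i v) x) =
      grovesTerm p αeff i v x := by
  have hC : (connectedComponentIn (typeSlice Θ i v) x ∩ typeSlice Θ i v).Nonempty :=
    ⟨x, mem_connectedComponentIn hx, hx⟩
  rw [componentPrice, dif_pos hC]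
  exact grovesTerm_eq_of_mem_connectedComponentIn heff hIC hx hC.some_mem.1

lemma price_eq_componentPrice (hIC : IC Θ αeff p) (hv : v ∈ Θ) :
    p i v = componentPrice Θ αeff p i v (connectedComponentIn (typeSlice Θ i v) (v i)) -
      ∑ j ∈ univ.erase i, v j (αeff v) := by
  rw [componentPrice_connectedComponentIn heff hIC (self_mem_typeSlice hv), grovesTerm,
    update_eq_self]
  ring

lemma constrC_componentPrice (hIC : IC Θ αeff p) (hIR : IR Θ αeff p) :
    ConstrC Θ αeff i v (componentPrice Θ αeff p i v) := by
  constructor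
  · intro x hx
    rw [componentPrice_connectedComponentIn heff hIC hx]
    exact grovesTerm_le_welfare heff hIR hx
  · intro x hx x' hx'
    rw [componentPrice_connectedComponentIn heff hIC hx,
      componentPrice_connectedComponentIn heff hIC hx']
    exact grovesTerm_sub_le heff hIC hx hx'

end GrovesTerm

section ComponentwiseGroves

variable {Θ : Set (Fin n → Γ → ℝ)} {αeff : (Fin n → Γ → ℝ) → Γ}
  {p : Fin n → (Fin n → Γ → ℝ) → ℝ} {h : Fin n → (Fin n → Γ → ℝ) → Set (Γ → ℝ) → ℝ}

lemma price_update_eq_of_componentwise_groves {i : Fin n}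
    (hindep : ∀ C, IndepOf i fun v => h i v C)
    (hform : ∀ v ∈ Θ, p i v = h i v (connectedComponentIn (typeSlice Θ i v) (v i)) -
      ∑ j ∈ univ.erase i, v j (αeff v))
    {v : Fin n → Γ → ℝ} {x : Γ → ℝ} (hx : x ∈ typeSlice Θ i v) :
    p i (update v i x) = h i v (connectedComponentIn (typeSlice Θ i v) x) -
      ∑ j ∈ univ.erase i, v j (αeff (update v i x)) := by
  rw [hform _ hx, update_self, typeSlice_update, sum_erase_update]
  exact congrArg (· - _) (hindep _ _ v fun j hj => update_of_ne hj x v)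

variable [Fintype Γ] [Nonempty Γ]
  (heff : ∀ v : Fin n → Γ → ℝ, ∑ j, v j (αeff v) = welfare v)
  (hindep : ∀ (i : Fin n) (C : Set (Γ → ℝ)), IndepOf i fun v => h i v C)
  (hform : ∀ i : Fin n, ∀ v ∈ Θ, p i v = h i v (connectedComponentIn (typeSlice Θ i v) (v i)) -
    ∑ j ∈ univ.erase i, v j (αeff v))
  (hconstr : ∀ (i : Fin n) (v : Fin n → Γ → ℝ), (typeSlice Θ i v).Nonempty →
    ConstrC Θ αeff i v (h i v))
include heff hindep hform hconstr

lemma IC_of_componentwise_groves_constrC : IC Θ αeff p := by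
  refine IC_iff_forall_typeSlice.2 fun i v x hx x' hx' => ?_
  have hC := (hconstr i v ⟨x, hx⟩).2 x hx x' hx'
  rw [welfare_update_eq heff] at hC
  rw [price_update_eq_of_componentwise_groves (hindep i) (hform i) hx,
    price_update_eq_of_componentwise_groves (hindep i) (hform i) hx']
  linarith

lemma IR_of_componentwise_groves_constrC : IR Θ αeff p := by
  refine IR_iff_forall_typeSlice.2 fun i v x hx => ?_
  have hC := (hconstr i v ⟨x, hx⟩).1 x hx
  rw [welfare_update_eq heff] at hC
  rw [price_update_eq_of_componentwise_groves (hindep i) (hform i) hx]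
  linarith

end ComponentwiseGroves

/-- Connected-component characterization of IC and IR pricing rules. -/
theorem IC_IR_iff_componentwise_groves_constr [Fintype Γ] [Nonempty Γ]
    (Θ : Set (Fin n → Γ → ℝ))
    (αeff : (Fin n → Γ → ℝ) → Γ)
    (heff : ∀ v : Fin n → Γ → ℝ, ∑ j, v j (αeff v) = welfare v)
    (p : Fin n → (Fin n → Γ → ℝ) → ℝ) :
    (IC Θ αeff p ∧ IR Θ αeff p) ↔
      ∃ h : Fin n → (Fin n → Γ → ℝ) → Set (Γ → ℝ) → ℝ,
        (∀ (i : Fin n) (C : Set (Γ → ℝ)), IndepOf i (fun v => h i v C)) ∧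
        (∀ i : Fin n, ∀ v ∈ Θ,
          p i v = h i v (connectedComponentIn (typeSlice Θ i v) (v i))
            - ∑ j ∈ Finset.univ.erase i, v j (αeff v)) ∧
        (∀ (i : Fin n) (v : Fin n → Γ → ℝ), (typeSlice Θ i v).Nonempty →
          ConstrC Θ αeff i v (h i v)) := by
  constructor
  · rintro ⟨hIC, hIR⟩
    exact ⟨componentPrice Θ αeff p, fun i => indepOf_componentPrice,
      fun i v hv => price_eq_componentPrice heff hIC hv,
      fun i v _ => constrC_componentPrice heff hIC hIR⟩
  · rintro ⟨h, hindep, hform, hconstr⟩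
    exact ⟨IC_of_componentwise_groves_constrC heff hindep hform hconstr,
      IR_of_componentwise_groves_constrC heff hindep hform hconstr⟩
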